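/- For λ ∈ ℂ*, the Neveu-Schwarz module Ω_NS(λ, 0) has a unique proper nonzero graded submodule Γ = xℂ[x] ⊕ ℂ[y], the quotient Ω_NS(λ, 0)/Γ is a 1-dimensional trivial NS-module, and Γ ≅ Π(Ω_NS(λ, 1/2)) via xf(x) ↦ (1/√(2λ)) f(y), f(y) ↦ (√λ/√2) f(x); in particular Γ is simple. -/
import Mathlib


open Polynomial

/-- `L_m` on the even part `ℂ[x]` of `Ω_NS(λ,α)`: `f ↦ λ^m (x + mα) f(x+m)`. -/
noncomputable def l0 (l a : ℂ) (m : ℤ) (f : Polynomial ℂ) : Polynomial ℂ :=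
  l ^ m • ((X + C ((m : ℂ) * a)) * f.comp (X + C (m : ℂ)))

/-- `L_m` on the odd part `ℂ[y]`: `g ↦ λ^m (y + m(α+1/2)) g(y+m)`. -/
noncomputable def nl1 (l a : ℂ) (m : ℤ) (g : Polynomial ℂ) : Polynomial ℂ :=
  l ^ m • ((X + C ((m : ℂ) * (a + 1/2))) * g.comp (X + C (m : ℂ)))

/-- `G_r` (with `r = k + 1/2`, `k ∈ ℤ`) from the even to the odd part:
`f(x) ↦ λ^{r−1/2} f(y+r)`. -/
noncomputable def ng01 (l : ℂ) (k : ℤ) (f : Polynomial ℂ) : Polynomial ℂ :=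
  l ^ k • f.comp (X + C ((k : ℂ) + 1/2))

/-- `G_r` (with `r = k + 1/2`) from the odd to the even part:
`g(y) ↦ λ^{r+1/2} (x + 2rα) g(x+r)`. -/
noncomputable def ng10 (l a : ℂ) (k : ℤ) (g : Polynomial ℂ) : Polynomial ℂ :=
  l ^ (k + 1) • ((X + C (2 * ((k : ℂ) + 1/2) * a)) * g.comp (X + C ((k : ℂ) + 1/2)))

/-- A graded submodule of `Ω_NS(λ,α)`. -/
def NSSub (l a : ℂ) (W0 W1 : Submodule ℂ (Polynomial ℂ)) : Prop :=
  (∀ (m : ℤ), ∀ f ∈ W0, l0 l a m f ∈ W0)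
  ∧ (∀ (m : ℤ), ∀ g ∈ W1, nl1 l a m g ∈ W1)
  ∧ (∀ (k : ℤ), ∀ f ∈ W0, ng01 l k f ∈ W1)
  ∧ (∀ (k : ℤ), ∀ g ∈ W1, ng10 l a k g ∈ W0)

/-- The subspace `x·ℂ[x]` of the even part: polynomials vanishing at `0`.  Together with
the full odd part it forms `Γ = xℂ[x] ⊕ ℂ[y]`. -/
noncomputable def XPoly : Submodule ℂ (Polynomial ℂ) where
  carrier := {p | p.eval 0 = 0}
  add_mem' := by intro a b ha hb; simp_all
  zero_mem' := by simp
  smul_mem' := by intro c p hp; simp_all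

lemma comp_add_comp_add (p : Polynomial ℂ) (a b : ℂ) :
    (p.comp (X + C a)).comp (X + C b) = p.comp (X + C (a + b)) := by
  rw [comp_assoc]; simp [add_comp]; ring_nf

lemma mem_of_smul_mem (W : Submodule ℂ (Polynomial ℂ)) {c : ℂ} (hc : c ≠ 0)
    {p : Polynomial ℂ} (h : c • p ∈ W) : p ∈ W := by
  have := W.smul_mem c⁻¹ h
  rwa [smul_smul, inv_mul_cancel₀ hc, one_smul] at this

section
variable {l : ℂ} {W0 W1 : Submodule ℂ (Polynomial ℂ)}

lemma hT (hl : l ≠ 0) (hs : NSSub l 0 W0 W1) (k k' : ℤ) {g : Polynomial ℂ} (hg : g ∈ W1) :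
    (X + C ((k':ℂ) + 1/2)) * g.comp (X + C ((k:ℂ) + (k':ℂ) + 1)) ∈ W1 := by
  have h1 := hs.2.2.2 k g hg
  have h2 := hs.2.2.1 k' _ h1
  apply mem_of_smul_mem W1 (c := l ^ k' * l ^ (k+1))
    (mul_ne_zero (zpow_ne_zero _ hl) (zpow_ne_zero _ hl))
  have : ng01 l k' (ng10 l 0 k g) =
      (l ^ k' * l ^ (k+1)) • ((X + C ((k':ℂ) + 1/2)) * g.comp (X + C ((k:ℂ) + (k':ℂ) + 1))) := by
    simp only [ng01, ng10, mul_zero, map_zero, add_zero, smul_comp, mul_comp, X_comp, add_comp,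
      C_comp, comp_add_comp_add, smul_smul]
    ring_nf
  rwa [← this]

lemma hTrans (hl : l ≠ 0) (hs : NSSub l 0 W0 W1) (d : ℤ) {g : Polynomial ℂ} (hg : g ∈ W1) :
    g.comp (X + C (d:ℂ)) ∈ W1 := by
  have h1 := hT hl hs (d - 2) 1 hg
  have h2 := hT hl hs (d - 1) 0 hg
  have e1 : ((d-2:ℤ):ℂ) + ((1:ℤ):ℂ) + 1 = (d:ℂ) := by push_cast; ring
  have e2 : ((d-1:ℤ):ℂ) + ((0:ℤ):ℂ) + 1 = (d:ℂ) := by push_cast; ring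
  rw [e1] at h1; rw [e2] at h2
  have e : g.comp (X + C (d:ℂ)) =
      (X + C (((1:ℤ):ℂ) + 1/2)) * g.comp (X + C (d:ℂ))
      - (X + C (((0:ℤ):ℂ) + 1/2)) * g.comp (X + C (d:ℂ)) := by
    rw [← sub_mul, add_sub_add_left_eq_sub, ← C_sub]
    norm_num
  rw [e]
  exact sub_mem h1 h2
end

section
variable {l : ℂ} {W0 W1 : Submodule ℂ (Polynomial ℂ)}

lemma hXmul (hl : l ≠ 0) (hs : NSSub l 0 W0 W1) {g : Polynomial ℂ} (hg : g ∈ W1) :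
    X * g ∈ W1 := by
  have h := hT hl hs (-1) 0 hg
  have e0 : ((-1:ℤ):ℂ) + ((0:ℤ):ℂ) + 1 = 0 := by push_cast; ring
  rw [e0, map_zero, add_zero, comp_X] at h
  have e : X * g = (X + C (((0:ℤ):ℂ) + 1/2)) * g - ((0:ℂ) + 1/2) • g := by
    rw [smul_eq_C_mul]; push_cast; ring
  rw [e]
  exact sub_mem h (W1.smul_mem _ hg)

lemma top_of_one_mem (hl : l ≠ 0) (hs : NSSub l 0 W0 W1) (h1 : (1 : Polynomial ℂ) ∈ W1) :
    W1 = ⊤ := by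
  have hX : ∀ n : ℕ, (X : Polynomial ℂ) ^ n ∈ W1 := by
    intro n
    induction n with
    | zero => simpa using h1
    | succ n ih => rw [pow_succ, mul_comm]; exact hXmul hl hs ih
  rw [eq_top_iff]
  rintro p -
  induction p using Polynomial.induction_on' with
  | add p q hp hq => exact add_mem hp hq
  | monomial n a =>
      rw [← smul_X_eq_monomial]
      exact W1.smul_mem a (hX n)

lemma periodic_eq_C (g : Polynomial ℂ) (hper : g.comp (X + C 1) = g) :
    g = C (g.eval 0) := by
  have hev : ∀ x : ℂ, g.eval (x + 1) = g.eval x := by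
    intro x
    conv_rhs => rw [← hper]
    simp [eval_comp]
  have hn : ∀ n : ℕ, g.eval (n : ℂ) = g.eval 0 := by
    intro n
    induction n with
    | zero => simp
    | succ n ih => push_cast; rw [hev]; push_cast at ih; exact ih
  have : (g - C (g.eval 0)) = 0 := by
    apply Polynomial.eq_zero_of_infinite_isRoot
    apply Set.Infinite.mono (s := Set.range (Nat.cast : ℕ → ℂ))
    · rintro x ⟨n, rfl⟩
      simp [IsRoot, hn n]
    · exact Set.infinite_range_of_injective Nat.cast_injective
  linear_combination this

lemma one_mem_of_ne_zero (hl : l ≠ 0) (hs : NSSub l 0 W0 W1)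
    {g : Polynomial ℂ} (hg : g ∈ W1) (hg0 : g ≠ 0) : (1 : Polynomial ℂ) ∈ W1 := by
  obtain ⟨n, hn⟩ : ∃ n, g.natDegree ≤ n := ⟨g.natDegree, le_rfl⟩
  induction n generalizing g with
  | zero =>
      obtain ⟨c, rfl⟩ : ∃ c, g = C c := ⟨g.coeff 0, Polynomial.eq_C_of_natDegree_le_zero hn⟩
      have hc : c ≠ 0 := fun h => hg0 (by rw [h, map_zero])
      have := W1.smul_mem c⁻¹ hg
      rwa [Polynomial.smul_C, smul_eq_mul, inv_mul_cancel₀ hc, map_one] at this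
  | succ n ih =>
      by_cases hdeg : g.natDegree ≤ n
      · exact ih hg hg0 hdeg
      · have hd : g.natDegree = n + 1 := le_antisymm hn (not_le.mp hdeg)
        have htr := hTrans hl hs 1 hg
        rw [show ((1:ℤ):ℂ) = 1 by norm_num] at htr
        set g' := g.comp (X + C (1:ℂ)) - g with hg'def
        have hg'mem : g' ∈ W1 := sub_mem htr hg
        have hg'ne : g' ≠ 0 := by
          intro h
          have hper : g.comp (X + C 1) = g := by
            have := sub_eq_zero.mp h
            simpa using this
          have := periodic_eq_C g hper
          rw [this] at hd
          simp at hd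
        have hcne : g.comp (X + C (1:ℂ)) ≠ 0 := by
          intro h
          apply hg0
          have := congrArg (fun q => q.comp (X - C (1:ℂ))) h
          simpa [comp_assoc] using this
        have hnc : (g.comp (X + C (1:ℂ))).natDegree = g.natDegree := by
          rw [natDegree_comp, natDegree_X_add_C, mul_one]
        have hdlt : g'.natDegree ≤ n := by
          have hcompdeg : (g.comp (X + C (1:ℂ))).degree = g.degree := by
            rw [degree_eq_natDegree hcne, degree_eq_natDegree hg0, hnc]
          have hlc : (g.comp (X + C (1:ℂ))).leadingCoeff = g.leadingCoeff := by
            rw [leadingCoeff_comp (by rw [natDegree_X_add_C]; norm_num),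
              leadingCoeff_X_add_C, one_pow, mul_one]
          have hsub := Polynomial.degree_sub_lt hcompdeg hcne hlc
          rw [hcompdeg] at hsub
          have hlt := Polynomial.natDegree_lt_natDegree hg'ne hsub
          omega
        exact ih hg'mem hg'ne hdlt
end

lemma mem_XPoly {p : Polynomial ℂ} : p ∈ XPoly ↔ p.eval 0 = 0 := Iff.rfl

section
variable {l : ℂ} {W0 W1 : Submodule ℂ (Polynomial ℂ)}

lemma W1_eq_top (hl : l ≠ 0) (hs : NSSub l 0 W0 W1) (hb : W1 ≠ ⊥) : W1 = ⊤ := by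
  obtain ⟨g, hg, hg0⟩ := Submodule.exists_mem_ne_zero_of_ne_bot hb
  exact top_of_one_mem hl hs (one_mem_of_ne_zero hl hs hg hg0)

lemma XPoly_le_W0 (hl : l ≠ 0) (hs : NSSub l 0 W0 W1) (ht : W1 = ⊤) : XPoly ≤ W0 := by
  intro p hp
  have hp0 : p.coeff 0 = 0 := by
    rw [Polynomial.coeff_zero_eq_eval_zero]; exact hp
  obtain ⟨q, rfl⟩ := (Polynomial.X_dvd_iff.mpr hp0)
  have hgmem : q.comp (X - C (((0:ℤ):ℂ) + 1/2)) ∈ W1 := by rw [ht]; trivial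
  have h := hs.2.2.2 0 _ hgmem
  have e : ng10 l 0 0 (q.comp (X - C (((0:ℤ):ℂ) + 1/2))) = l ^ ((0:ℤ)+1) • (X * q) := by
    rw [ng10]
    rw [comp_assoc]
    simp
  rw [e] at h
  exact mem_of_smul_mem W0 (zpow_ne_zero _ hl) h

lemma classify (hl : l ≠ 0) (hs : NSSub l 0 W0 W1) :
    (W0 = ⊥ ∧ W1 = ⊥) ∨ (XPoly ≤ W0 ∧ W1 = ⊤) := by
  by_cases hb : W1 = ⊥
  · left
    refine ⟨?_, hb⟩
    rw [Submodule.eq_bot_iff]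
    intro f hf
    by_contra hf0
    have h := hs.2.2.1 0 f hf
    rw [hb, Submodule.mem_bot] at h
    apply hf0
    have : f.comp (X + C (((0:ℤ):ℂ) + 1/2)) = 0 := by
      have := h
      rw [ng01] at this
      exact (smul_eq_zero.mp this).resolve_left (zpow_ne_zero _ hl)
    have := congrArg (fun r => r.comp (X - C (((0:ℤ):ℂ) + 1/2))) this
    simpa [comp_assoc] using this
  · have ht := W1_eq_top hl hs hb
    exact Or.inr ⟨XPoly_le_W0 hl hs ht, ht⟩

lemma W0_top_of_not_le (hle : XPoly ≤ W0) (hnot : ¬ W0 ≤ XPoly) : W0 = ⊤ := by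
  obtain ⟨f, hf, hfx⟩ := Set.not_subset.mp hnot
  have hc : f.eval 0 ≠ 0 := fun h => hfx h
  have h1 : (1 : Polynomial ℂ) ∈ W0 := by
    have hsub : f - C (f.eval 0) ∈ W0 := hle (by simp [mem_XPoly])
    have hC : C (f.eval 0) ∈ W0 := by
      have := W0.sub_mem hf hsub
      simpa using this
    have := W0.smul_mem (f.eval 0)⁻¹ hC
    rwa [Polynomial.smul_C, smul_eq_mul, inv_mul_cancel₀ hc, map_one] at this
  rw [eq_top_iff]
  intro p _
  have hsub : p - C (p.eval 0) ∈ W0 := hle (by simp [mem_XPoly])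
  have hC : C (p.eval 0) ∈ W0 := by
    have := W0.smul_mem (p.eval 0) h1
    rwa [smul_eq_C_mul, mul_one] at this
  simpa using W0.add_mem hsub hC
end

/-- for `λ ∈ ℂ*` (with fixed square root `μ`, so `√(2λ) = √2·μ`),
`Γ = xℂ[x] ⊕ ℂ[y]` is the unique proper nonzero graded submodule of `Ω_NS(λ,0)`,
the quotient is a 1-dimensional trivial module, and
`ψ : xf(x) ↦ (1/√(2λ)) f(y), f(y) ↦ (√λ/√2) f(x)` is an isomorphism of `NS`-modules
`Γ ≅ Π(Ω_NS(λ,1/2))` (the four displayed identities express that `ψ` intertwines the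
actions); in particular `Γ` is simple. -/
theorem ns_alpha_zero_structure (l mu : ℂ) (hl : l ≠ 0) (hmu : mu ^ 2 = l) :
    NSSub l 0 XPoly ⊤
    ∧ (∀ W0 W1 : Submodule ℂ (Polynomial ℂ), NSSub l 0 W0 W1 →
        ¬(W0 = ⊥ ∧ W1 = ⊥) → ¬(W0 = ⊤ ∧ W1 = ⊤) → W0 = XPoly ∧ W1 = ⊤)
    ∧ Module.finrank ℂ (Polynomial ℂ ⧸ XPoly) = 1
    ∧ (∀ (m : ℤ) (f : Polynomial ℂ), l0 l 0 m f ∈ XPoly)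
    ∧ (∀ (k : ℤ) (g : Polynomial ℂ), ng10 l 0 k g ∈ XPoly)
    ∧ (∀ (m k : ℤ) (h g : Polynomial ℂ),
        l0 l 0 m (X * h) = X * nl1 l (1/2) m h
        ∧ nl1 l 0 m g = l0 l (1/2) m g
        ∧ (mu / (Real.sqrt 2 : ℂ)) • ng01 l k (X * h)
            = ng10 l (1/2) k ((((Real.sqrt 2 : ℂ)) * mu)⁻¹ • h)
        ∧ (((Real.sqrt 2 : ℂ)) * mu)⁻¹ • ng10 l 0 k g
            = X * ng01 l k ((mu / (Real.sqrt 2 : ℂ)) • g))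
    ∧ (∀ W0 W1 : Submodule ℂ (Polynomial ℂ), W0 ≤ XPoly → NSSub l 0 W0 W1 →
        (W0 = ⊥ ∧ W1 = ⊥) ∨ (W0 = XPoly ∧ W1 = ⊤)) := by
  have hmu0 : mu ≠ 0 := fun h => hl (by rw [← hmu, h]; ring)
  have hs2 : ((Real.sqrt 2 : ℝ) : ℂ) ≠ 0 := by
    have : (0:ℝ) < Real.sqrt 2 := Real.sqrt_pos.mpr (by norm_num)
    exact Complex.ofReal_ne_zero.mpr this.ne'
  have part4 : ∀ (m : ℤ) (f : Polynomial ℂ), l0 l 0 m f ∈ XPoly := by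
    intro m f
    rw [mem_XPoly, l0, smul_eq_C_mul]
    simp
  have part5 : ∀ (k : ℤ) (g : Polynomial ℂ), ng10 l 0 k g ∈ XPoly := by
    intro k g
    rw [mem_XPoly, ng10, smul_eq_C_mul]
    simp
  have part1 : NSSub l 0 XPoly ⊤ :=
    ⟨fun m f _ => part4 m f, fun _ _ _ => trivial, fun _ _ _ => trivial,
      fun k g _ => part5 k g⟩
  refine ⟨part1, ?_, ?_, part4, part5, ?_, ?_⟩
  · intro W0 W1 hs hnb hnt
    rcases classify hl hs with h | ⟨hle, ht⟩
    · exact absurd h hnb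
    · refine ⟨?_, ht⟩
      by_cases hW0le : W0 ≤ XPoly
      · exact le_antisymm hW0le hle
      · exact absurd ⟨W0_top_of_not_le hle hW0le, ht⟩ hnt
  · have hker : LinearMap.ker (Polynomial.leval (R := ℂ) 0) = XPoly := by
      ext p
      simp [Polynomial.leval_apply, mem_XPoly, LinearMap.mem_ker]
    rw [← hker]
    exact (LinearEquiv.finrank_eq (LinearMap.quotKerEquivOfSurjective _
      (fun c => ⟨C c, by simp [Polynomial.leval_apply]⟩))).trans (Module.finrank_self ℂ)
  · intro m k h g
    refine ⟨?_, ?_, ?_, ?_⟩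
    · rw [l0, nl1, mul_comp, X_comp, mul_smul_comm]
      congr 1
      rw [show (m:ℂ) * 0 = 0 by ring, show (m:ℂ) * (1/2 + 1/2) = (m:ℂ) by ring,
        map_zero, add_zero]
    · rw [nl1, l0]
      norm_num
    · rw [ng01, ng10, mul_comp, X_comp, Polynomial.smul_comp, smul_smul,
        show 2 * ((k:ℂ) + 1/2) * (1/2) = (k:ℂ) + 1/2 by ring, mul_smul_comm, smul_smul]
      congr 1
      rw [zpow_add_one₀ hl, ← hmu]
      field_simp
    · rw [ng01, ng10, Polynomial.smul_comp, smul_smul, smul_smul, mul_smul_comm,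
        show 2 * ((k:ℂ) + 1/2) * 0 = 0 by ring, map_zero, add_zero]
      congr 1
      rw [zpow_add_one₀ hl, ← hmu]
      field_simp
  · intro W0 W1 hW0 hs
    rcases classify hl hs with hb | ⟨hle, ht⟩
    · exact Or.inl hb
    · exact Or.inr ⟨le_antisymm hW0 hle, ht⟩
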